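/- arXiv:1512.03171 — 2 statements merged into one kernel-verified Lean document; each statement's English description precedes it below -/
import Mathlib

section
/- Let F̂(z) = Mz + G(z) be a lift of a torus map satisfying the expanding-block assumption, and let Φ̂(z) = lim_{n→∞} A^{−n} P(F̂^n(z)). Then Φ̂ admits the series representation Φ̂(z) = P z + Σ_{j=1}^{∞} A^{−j} P(G(F̂^{j−1}(z))), where the series converges uniformly in z ∈ ℝ^d. -/
open Filter Topology

noncomputable section

/-- Reinterpret a vector `Fin d → ℝ` as a point of Euclidean space `ℝ^d`. -/
def toEuc (d : ℕ) (v : Fin d → ℝ) : EuclideanSpace ℝ (Fin d) := WithLp.toLp 2 v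

/-- Projection onto the first `k` coordinates of `ℝ^d`. -/
def projP (d k : ℕ) (h : k ≤ d) (z : EuclideanSpace ℝ (Fin d)) :
    EuclideanSpace ℝ (Fin k) :=
  WithLp.toLp 2 (fun i => z (Fin.castLE h i))

/-!
Since `P F̂ = A P + P G`, applying `A⁻ⁿ` and telescoping gives exactly
`A⁻ⁿ P F̂ⁿ z = P z + Σ_{j<n} A⁻⁽ʲ⁺¹⁾ P G(F̂ʲ z)`, so `Φ̂` is the pointwise sum of this series.
Its `j`-th term is bounded by `C ‖A⁻¹‖ʲ⁺¹` uniformly in `z` (`C` a bound for `G`), and the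
Weierstrass M-test upgrades the convergence to uniform convergence.
-/

lemma projP_add (d k : ℕ) (h : k ≤ d) (x y : EuclideanSpace ℝ (Fin d)) :
    projP d k h (x + y) = projP d k h x + projP d k h y :=
  rfl

lemma norm_projP_le (d k : ℕ) (h : k ≤ d) (z : EuclideanSpace ℝ (Fin d)) :
    ‖projP d k h z‖ ≤ ‖z‖ := by
  rw [EuclideanSpace.norm_eq, EuclideanSpace.norm_eq]
  apply Real.sqrt_le_sqrt
  calc ∑ i : Fin k, ‖projP d k h z i‖ ^ 2
      = ∑ j ∈ Finset.univ.map (Fin.castLEEmb h), ‖z j‖ ^ 2 := by rw [Finset.sum_map]; rfl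
    _ ≤ ∑ j, ‖z j‖ ^ 2 :=
      Finset.sum_le_sum_of_subset_of_nonneg (Finset.subset_univ _) fun _ _ _ => by positivity

namespace ContinuousLinearEquiv

lemma norm_pow_apply_le {E : Type*} [NormedAddCommGroup E] [NormedSpace ℝ E]
    (e : E ≃L[ℝ] E) (n : ℕ) (x : E) :
    ‖(e ^ n) x‖ ≤ ‖(e : E →L[ℝ] E)‖ ^ n * ‖x‖ := by
  induction n generalizing x with
  | zero => rw [pow_zero, pow_zero, one_mul]; rfl
  | succ n ih =>
    calc ‖(e ^ (n + 1)) x‖ = ‖(e ^ n) (e x)‖ := by rw [pow_succ]; rfl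
      _ ≤ ‖(e : E →L[ℝ] E)‖ ^ n * ‖e x‖ := ih _
      _ ≤ ‖(e : E →L[ℝ] E)‖ ^ n * (‖(e : E →L[ℝ] E)‖ * ‖x‖) := by
        gcongr; exact e.toContinuousLinearMap.le_opNorm x
      _ = ‖(e : E →L[ℝ] E)‖ ^ (n + 1) * ‖x‖ := by ring

lemma symm_pow_apply_iterate_eq_add_sum {R V X : Type*} [Semiring R] [TopologicalSpace V]
    [AddCommMonoid V] [Module R V] (L : V ≃L[R] V) (P : X → V) (F : X → X) (b : X → V)
    (hPF : ∀ z, P (F z) = L (P z) + b z) (N : ℕ) (z : X) :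
    (L.symm ^ N) (P (F^[N] z)) =
      P z + ∑ j ∈ Finset.range N, (L.symm ^ (j + 1)) (b (F^[j] z)) := by
  induction N with
  | zero => simp only [pow_zero, Finset.sum_range_zero, add_zero]; rfl
  | succ N ih =>
    have hpow : ∀ x, (L.symm ^ (N + 1)) x = (L.symm ^ N) (L.symm x) := fun x => by
      rw [pow_succ]; rfl
    rw [Function.iterate_succ_apply', hPF, hpow, map_add, L.symm_apply_apply, map_add, ih,
      ← hpow, Finset.sum_range_succ, add_assoc]

end ContinuousLinearEquiv

lemma tendstoUniformly_add_sum_range_of_norm_le {β F : Type*} [NormedAddCommGroup F]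
    [CompleteSpace F] {a : β → F} {f : ℕ → β → F} {u : ℕ → ℝ} (hu : Summable u)
    (hfu : ∀ n x, ‖f n x‖ ≤ u n) {Φ : β → F}
    (hΦ : ∀ x, Tendsto (fun N => a x + ∑ n ∈ Finset.range N, f n x) atTop (𝓝 (Φ x))) :
    TendstoUniformly (fun N x => a x + ∑ n ∈ Finset.range N, f n x) Φ atTop := by
  have hsum := tendstoUniformly_tsum_nat hu hfu
  obtain rfl : Φ = fun x => a x + ∑' n, f n x := funext fun x =>
    tendsto_nhds_unique (hΦ x) ((hsum.tendsto_at x).const_add (a x))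
  rw [Metric.tendstoUniformly_iff] at hsum ⊢
  simpa only [dist_add_left] using hsum

theorem stmt1_general (d k : ℕ) (hkd : k ≤ d)
    (M : Matrix (Fin d) (Fin d) ℝ)
    (G : EuclideanSpace ℝ (Fin d) → EuclideanSpace ℝ (Fin d))
    (hGbdd : ∃ C, ∀ z, ‖G z‖ ≤ C)
    (F : EuclideanSpace ℝ (Fin d) → EuclideanSpace ℝ (Fin d))
    (hF : ∀ z, F z = toEuc d (M.mulVec z) + G z)
    (A : EuclideanSpace ℝ (Fin k) ≃L[ℝ] EuclideanSpace ℝ (Fin k))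
    (hPM : ∀ z : EuclideanSpace ℝ (Fin d),
      projP d k hkd (toEuc d (M.mulVec z)) = A (projP d k hkd z))
    (hA : ‖(A.symm : EuclideanSpace ℝ (Fin k) →L[ℝ] EuclideanSpace ℝ (Fin k))‖ < 1)
    (Φ : EuclideanSpace ℝ (Fin d) → EuclideanSpace ℝ (Fin k))
    (hΦ : ∀ z, Tendsto (fun n : ℕ => (A.symm ^ n) (projP d k hkd (F^[n] z)))
      atTop (𝓝 (Φ z))) :
    TendstoUniformly (fun (N : ℕ) (z : EuclideanSpace ℝ (Fin d)) =>
        projP d k hkd z +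
          ∑ j ∈ Finset.range N, (A.symm ^ (j + 1)) (projP d k hkd (G (F^[j] z))))
      Φ atTop := by
  obtain ⟨C, hC⟩ := hGbdd
  set r := ‖(A.symm : EuclideanSpace ℝ (Fin k) →L[ℝ] EuclideanSpace ℝ (Fin k))‖
  have hstep : ∀ z, projP d k hkd (F z) = A (projP d k hkd z) + projP d k hkd (G z) :=
    fun z => by rw [hF, projP_add, hPM]
  refine tendstoUniformly_add_sum_range_of_norm_le (u := fun j => r ^ (j + 1) * C)
    ((summable_nat_add_iff 1).mpr (summable_geometric_of_lt_one (norm_nonneg _) hA)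
      |>.mul_right C) (fun j z => ?_) fun z => ?_
  · exact (A.symm.norm_pow_apply_le _ _).trans <|
      mul_le_mul_of_nonneg_left ((norm_projP_le _ _ _ _).trans (hC _)) (by positivity)
  · simpa only [A.symm_pow_apply_iterate_eq_add_sum _ F _ hstep] using hΦ z

/--
Let `F̂(z) = Mz + G(z)` be a lift of a torus map satisfying the
expanding-block assumption, and let `Φ̂(z) = lim_{n→∞} A⁻ⁿ P(F̂ⁿ(z))`. Then `Φ̂` admits the
series representation `Φ̂(z) = P z + Σ_{j=1}^{∞} A⁻ʲ P(G(F̂^{j−1}(z)))`, where the series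
converges uniformly in `z ∈ ℝ^d`.
-/
theorem stmt1 (d k : ℕ) (hk : 1 ≤ k) (hkd : k ≤ d)
    (M : Matrix (Fin d) (Fin d) ℝ) (hMint : ∀ i j, ∃ n : ℤ, M i j = (n : ℝ))
    (G : EuclideanSpace ℝ (Fin d) → EuclideanSpace ℝ (Fin d))
    (hGcont : Continuous G) (hGbdd : ∃ C, ∀ z, ‖G z‖ ≤ C)
    (hGper : ∀ (z : EuclideanSpace ℝ (Fin d)) (p : Fin d → ℤ),
      G (z + toEuc d fun i => (p i : ℝ)) = G z)
    (F : EuclideanSpace ℝ (Fin d) → EuclideanSpace ℝ (Fin d))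
    (hF : ∀ z, F z = toEuc d (M.mulVec z) + G z)
    (A : EuclideanSpace ℝ (Fin k) ≃L[ℝ] EuclideanSpace ℝ (Fin k))
    (hPM : ∀ z : EuclideanSpace ℝ (Fin d),
      projP d k hkd (toEuc d (M.mulVec z)) = A (projP d k hkd z))
    (hA : ‖(A.symm : EuclideanSpace ℝ (Fin k) →L[ℝ] EuclideanSpace ℝ (Fin k))‖ < 1)
    (Φ : EuclideanSpace ℝ (Fin d) → EuclideanSpace ℝ (Fin k))
    (hΦ : ∀ z, Tendsto (fun n : ℕ => (A.symm ^ n) (projP d k hkd (F^[n] z)))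
      atTop (𝓝 (Φ z))) :
    TendstoUniformly (fun (N : ℕ) (z : EuclideanSpace ℝ (Fin d)) =>
        projP d k hkd z +
          ∑ j ∈ Finset.range N, (A.symm ^ (j + 1)) (projP d k hkd (G (F^[j] z))))
      Φ atTop :=
  stmt1_general d k hkd M G hGbdd F hF A hPM hA Φ hΦ
end
end

section
/- Let M be a d×d integer matrix of block-diagonal form M(z) = (m·z₁, C(Qz)), where m is an integer with |m| > 1 and C is a (d−1)×(d−1) integer matrix with operator norm ‖C‖ < |m|. Then there exists δ = δ(M) > 0 such that for every C¹, ℤ^d-periodic map G: ℝ^d → ℝ^d with sup_{z}(‖G(z)‖ + ‖DG(z)‖) < δ, the lift F̂(z) = Mz + G(z) satisfies: the limit Φ̂(z) = lim_{n→∞} m^{−n} (F̂^n(z))₁ exists for all z, the map Ĥ(z) = (Φ̂(z), Qz) is a homeomorphism of ℝ^d with Ĥ(z + p) = Ĥ(z) + (p₁, Qp) for all p ∈ ℤ^d, and Ĥ∘F̂∘Ĥ^{−1}(x, y) = (m·x, g(x,y)) for some continuous g. Hence the torus map induced by F̂ is topologically conjugate to a skew product over the expanding circle map x ↦ mx mod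 1, for every sufficiently small C¹ periodic perturbation G. -/
/-!
In the coordinates `z ↦ (z₁, Qz)` the lift becomes `f (x, y) = (m x, C y) + g (x, y)` on
`ℝ × ℝ^(d-1)`, with `g` bounded, `ℤ^d`-periodic and `ε`-Lipschitz for a small `ε`. Since
`x ∘ f = m x + O(1)`, the normalised first coordinates `m⁻ⁿ x (fⁿ w)` converge geometrically to a
continuous `Φ` with `Φ ∘ f = m Φ` and `Φ - x` bounded. As `‖C‖ + 2ε ≤ |m|`, the cone
`‖Δy‖ ≤ |Δx|` is invariant and `|Δx|` grows in it by the factor `|m| - ε > 1`; two points with the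
same `y` and the same `Φ` would therefore have first coordinates that separate exponentially while
staying a bounded distance apart, so `Ĥ = (Φ, y)` is injective. It is onto by the intermediate
value theorem on each line `y = const` and proper because it moves points by a bounded amount,
hence a homeomorphism; periodicity of `g` makes it `ℤ^d`-equivariant, so it descends to the torus.
-/

open Filter Topology

noncomputable section

/-- The canonical projection `ℝ^n → ℝ^n/ℤ^n` (the `n`-torus), coordinatewise `mod 1`. -/
def torusProj (n : ℕ) (z : EuclideanSpace ℝ (Fin n)) : Fin n → AddCircle (1 : ℝ) :=
  fun i => ((z i : ℝ) : AddCircle (1 : ℝ))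

/-- Projection onto the last `d - k` coordinates of `ℝ^d`. -/
def projQ (d k : ℕ) (h : k ≤ d) (z : EuclideanSpace ℝ (Fin d)) :
    EuclideanSpace ℝ (Fin (d - k)) :=
  WithLp.toLp 2 (fun j : Fin (d - k) => z ⟨k + j.val, by have := j.isLt; omega⟩)

open scoped NNReal

section ExpandingLimit

variable {X : Type*} {f : X → X} {u : X → ℝ} {m : ℝ}

lemma pow_inv_mul_iterate_eq_add_sum (hm : m ≠ 0) (x : X) (n : ℕ) :
    (m ^ n)⁻¹ * u (f^[n] x) =
      u x + ∑ k ∈ Finset.range n, (m ^ (k + 1))⁻¹ * (u (f (f^[k] x)) - m * u (f^[k] x)) := by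
  induction n with
  | zero => simp
  | succ n ih =>
    rw [Finset.sum_range_succ, ← add_assoc, ← ih, Function.iterate_succ_apply']
    field_simp
    ring

theorem exists_tendsto_pow_inv_mul_iterate [TopologicalSpace X] (hf : Continuous f)
    (hu : Continuous u) (hm : 1 < |m|) {δ : ℝ} (hδ : ∀ x, |u (f x) - m * u x| ≤ δ) :
    ∃ Φ : X → ℝ, (∀ x, Tendsto (fun n => (m ^ n)⁻¹ * u (f^[n] x)) atTop (𝓝 (Φ x))) ∧
      Continuous Φ ∧ ∀ x, |Φ x - u x| ≤ δ / (|m| - 1) := by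
  have hm0 : m ≠ 0 := abs_pos.1 (by linarith)
  obtain ⟨r, hr⟩ : ∃ r, r = |m|⁻¹ := ⟨_, rfl⟩
  have hr0 : 0 ≤ r := hr ▸ by positivity
  have hr1 : r < 1 := hr ▸ inv_lt_one_of_one_lt₀ hm
  set term : ℕ → X → ℝ := fun k x => (m ^ (k + 1))⁻¹ * (u (f (f^[k] x)) - m * u (f^[k] x))
  have hterm : ∀ k x, ‖term k x‖ ≤ δ * r * r ^ k := fun k x => by
    calc ‖term k x‖ = r ^ (k + 1) * |u (f (f^[k] x)) - m * u (f^[k] x)| := by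
          simp [term, hr, inv_pow]
      _ ≤ r ^ (k + 1) * δ := by gcongr; exact hδ _
      _ = δ * r * r ^ k := by ring
  have hsum : HasSum (fun k => δ * r * r ^ k) (δ / (|m| - 1)) := by
    have : |m| - 1 ≠ 0 := by linarith
    rw [show δ / (|m| - 1) = δ * r * (1 - r)⁻¹ by rw [hr]; field_simp]
    exact (hasSum_geometric_of_lt_one hr0 hr1).mul_left (δ * r)
  refine ⟨fun x => u x + ∑' k, term k x, fun x => ?_, ?_, fun x => ?_⟩
  · have := ((hsum.summable.of_norm_bounded (hterm · x)).hasSum.tendsto_sum_nat).const_add (u x)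
    exact this.congr fun n => (pow_inv_mul_iterate_eq_add_sum hm0 x n).symm
  · refine hu.add (continuous_tsum (fun k => ?_) hsum.summable hterm)
    have hk := hf.iterate k
    exact continuous_const.mul ((hu.comp (hf.comp hk)).sub (continuous_const.mul (hu.comp hk)))
  · simpa [← Real.norm_eq_abs] using tsum_of_norm_bounded hsum (hterm · x)

lemma map_eq_mul_of_tendsto_iterate {Φ : X → ℝ} (hm : m ≠ 0)
    (hΦ : ∀ x, Tendsto (fun n => (m ^ n)⁻¹ * u (f^[n] x)) atTop (𝓝 (Φ x))) (x : X) :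
    Φ (f x) = m * Φ x := by
  refine tendsto_nhds_unique (hΦ (f x)) ?_
  refine (((hΦ x).comp (tendsto_add_atTop_nat 1)).const_mul m).congr fun n => ?_
  simp only [Function.comp_apply, Function.iterate_succ_apply]
  field_simp
  ring

lemma eq_add_of_tendsto_iterate {Φ : X → ℝ} (hm : m ≠ 0)
    (hΦ : ∀ x, Tendsto (fun n => (m ^ n)⁻¹ * u (f^[n] x)) atTop (𝓝 (Φ x))) {x x' : X} {c : ℝ}
    (h : ∀ n, u (f^[n] x') = u (f^[n] x) + m ^ n * c) : Φ x' = Φ x + c := by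
  refine tendsto_nhds_unique (hΦ x') (((hΦ x).add_const c).congr fun n => ?_)
  rw [h, mul_add, inv_mul_cancel_left₀ (pow_ne_zero n hm)]

end ExpandingLimit

theorem isProperMap_of_norm_sub_le {V : Type*} [NormedAddCommGroup V] [ProperSpace V]
    {h : V → V} (hh : Continuous h) {B : ℝ} (hB : ∀ v, ‖h v - v‖ ≤ B) : IsProperMap h := by
  rw [isProperMap_iff_tendsto_cocompact, ← Metric.cobounded_eq_cocompact,
    ← tendsto_norm_atTop_iff_cobounded]
  refine ⟨hh, tendsto_atTop_mono (fun v => ?_)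
    (tendsto_atTop_add_const_right _ (-B) tendsto_norm_cobounded_atTop)⟩
  have := norm_sub_norm_le v (h v)
  rw [norm_sub_rev] at this
  linarith [hB v]

lemma Function.iterate_add_of_map_add {V : Type*} [Add V] {f A : V → V} {Γ : Set V}
    (hA : Set.MapsTo A Γ Γ) (hf : ∀ w, ∀ v ∈ Γ, f (w + v) = f w + A v) (n : ℕ) :
    ∀ w, ∀ v ∈ Γ, f^[n] (w + v) = f^[n] w + A^[n] v := by
  induction n with
  | zero => simp
  | succ n ih =>
    intro w v hv
    rw [Function.iterate_succ_apply, Function.iterate_succ_apply, hf w v hv, ih _ _ (hA hv)]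
    rfl

section SkewPerturbation

variable {E : Type*} [NormedAddCommGroup E]

theorem exists_homeomorph_prodMk_of_abs_sub_fst_le [ProperSpace E] {Φ : ℝ × E → ℝ}
    (hΦ : Continuous Φ) {B : ℝ} (hB : ∀ w, |Φ w - w.1| ≤ B)
    (hfib : ∀ w w', w.2 = w'.2 → Φ w = Φ w' → w.1 = w'.1) :
    ∃ H : (ℝ × E) ≃ₜ (ℝ × E), ∀ w, H w = (Φ w, w.2) := by
  set h : ℝ × E → ℝ × E := fun w => (Φ w, w.2)
  have hcont : Continuous h := hΦ.prodMk continuous_snd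
  have hinj : Function.Injective h := fun w w' hw => by
    obtain ⟨h1, h2⟩ := Prod.ext_iff.1 hw
    exact Prod.ext (hfib w w' h2 h1) h2
  have hsurj : Function.Surjective h := by
    rintro ⟨x, y⟩
    have hline : Continuous fun t => Φ (t, y) := hΦ.comp (.prodMk_left y)
    obtain ⟨t, ht⟩ := hline.surjective
      (tendsto_atTop_mono (fun t => by dsimp only [id]; linarith [(abs_le.1 (hB (t, y))).1])
        (tendsto_atTop_add_const_right _ (-B) tendsto_id))
      (tendsto_atBot_mono (fun t => by dsimp only [id]; linarith [(abs_le.1 (hB (t, y))).2])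
        (tendsto_atBot_add_const_right _ B tendsto_id)) x
    exact ⟨(t, y), by simp [h, ht]⟩
  have hclosed : IsClosedMap h := by
    refine (isProperMap_of_norm_sub_le hcont (B := B) fun w => ?_).isClosedMap
    have : h w - w = (Φ w - w.1, 0) := by ext <;> simp [h]
    rw [this, Prod.norm_mk, norm_zero, Real.norm_eq_abs, max_eq_left (abs_nonneg _)]
    exact hB w
  exact ⟨(Equiv.ofBijective h ⟨hinj, hsurj⟩).toHomeomorphOfContinuousClosed hcont hclosed,
    fun _ => rfl⟩

lemma norm_sub_eq_abs_fst_sub {w w' : ℝ × E} (hw : ‖w.2 - w'.2‖ ≤ |w.1 - w'.1|) :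
    ‖w - w'‖ = |w.1 - w'.1| := by
  rw [Prod.norm_def, Prod.fst_sub, Prod.snd_sub, Real.norm_eq_abs, max_eq_left hw]

variable [NormedSpace ℝ E] {m : ℝ} {C : E →L[ℝ] E} {f g : ℝ × E → ℝ × E} {ε : ℝ≥0}

lemma eq_add_fst_of_periodic (hf : ∀ w, f w = (m * w.1, C w.2) + g w) {Γ : Set (ℝ × E)}
    (hΓ : ∀ v ∈ Γ, (m * v.1, C v.2) ∈ Γ) (hgΓ : ∀ w, ∀ v ∈ Γ, g (w + v) = g w) (hm : m ≠ 0)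
    {Φ : ℝ × E → ℝ} (hlim : ∀ w, Tendsto (fun n => (m ^ n)⁻¹ * (f^[n] w).1) atTop (𝓝 (Φ w)))
    (w : ℝ × E) {v : ℝ × E} (hv : v ∈ Γ) : Φ (w + v) = Φ w + v.1 := by
  have hfΓ : ∀ w, ∀ v ∈ Γ, f (w + v) = f w + Prod.map (m * ·) C v := fun w v hv => by
    rw [hf, hf, hgΓ w v hv]
    refine Prod.ext ?_ ?_
    · simp only [Prod.fst_add, Prod.map_fst]; ring
    · simp only [Prod.snd_add, Prod.map_snd, map_add]; abel
  refine eq_add_of_tendsto_iterate hm hlim fun n => ?_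
  rw [Function.iterate_add_of_map_add (A := Prod.map (m * ·) C) hΓ hfΓ n w v hv, Prod.fst_add,
    Prod.map_iterate, Prod.map_fst, mul_left_iterate]

section
variable (hf : ∀ w, f w = (m * w.1, C w.2) + g w) (hg : LipschitzWith ε g)
include hf hg

lemma mul_abs_fst_sub_le_of_cone {w w'} (hw : ‖w.2 - w'.2‖ ≤ |w.1 - w'.1|) :
    (|m| - ε) * |w.1 - w'.1| ≤ |(f w).1 - (f w').1| := by
  have hgw : |(g w).1 - (g w').1| ≤ ε * |w.1 - w'.1| := by
    rw [← norm_sub_eq_abs_fst_sub hw]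
    exact (norm_fst_le (g w - g w')).trans (hg.norm_sub_le w w')
  have : (f w).1 - (f w').1 = m * (w.1 - w'.1) + ((g w).1 - (g w').1) := by
    simp only [hf, Prod.fst_add]; ring
  rw [this]
  have := abs_sub_abs_le_abs_sub (m * (w.1 - w'.1)) (-((g w).1 - (g w').1))
  rw [abs_neg, sub_neg_eq_add, abs_mul] at this
  linarith

lemma norm_snd_sub_le_of_cone {w w'} (hw : ‖w.2 - w'.2‖ ≤ |w.1 - w'.1|) :
    ‖(f w).2 - (f w').2‖ ≤ (‖C‖ + ε) * |w.1 - w'.1| := by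
  have : (f w).2 - (f w').2 = C (w.2 - w'.2) + ((g w).2 - (g w').2) := by
    simp only [hf, Prod.snd_add, map_sub]; abel
  rw [this, add_mul]
  refine (norm_add_le _ _).trans (add_le_add ?_ ?_)
  · exact (C.le_opNorm _).trans (mul_le_mul_of_nonneg_left hw (norm_nonneg C))
  · rw [← norm_sub_eq_abs_fst_sub hw]
    exact (norm_snd_le (g w - g w')).trans (hg.norm_sub_le w w')

variable (hεC : ‖C‖ + 2 * ε ≤ |m|)
include hεC

lemma norm_snd_sub_le_abs_fst_sub_iterate {w w'} (hw : ‖w.2 - w'.2‖ ≤ |w.1 - w'.1|) (n : ℕ) :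
    ‖(f^[n] w).2 - (f^[n] w').2‖ ≤ |(f^[n] w).1 - (f^[n] w').1| := by
  induction n with
  | zero => exact hw
  | succ n ih =>
    rw [Function.iterate_succ_apply', Function.iterate_succ_apply']
    calc _ ≤ (‖C‖ + ε) * |(f^[n] w).1 - (f^[n] w').1| := norm_snd_sub_le_of_cone hf hg ih
      _ ≤ (|m| - ε) * |(f^[n] w).1 - (f^[n] w').1| := by gcongr; linarith
      _ ≤ _ := mul_abs_fst_sub_le_of_cone hf hg ih

lemma pow_mul_abs_fst_sub_le_iterate {w w'} (hw : ‖w.2 - w'.2‖ ≤ |w.1 - w'.1|) (n : ℕ) :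
    (|m| - ε) ^ n * |w.1 - w'.1| ≤ |(f^[n] w).1 - (f^[n] w').1| := by
  induction n with
  | zero => simp
  | succ n ih =>
    rw [Function.iterate_succ_apply', Function.iterate_succ_apply', pow_succ', mul_assoc]
    have hpos : 0 ≤ |m| - ε := by linarith [norm_nonneg C, ε.2]
    exact (mul_le_mul_of_nonneg_left ih hpos).trans
      (mul_abs_fst_sub_le_of_cone hf hg (norm_snd_sub_le_abs_fst_sub_iterate hf hg hεC hw n))

lemma fst_eq_of_semiconj (hε1 : 1 + ε < |m|) {Φ : ℝ × E → ℝ} (hΦf : ∀ w, Φ (f w) = m * Φ w)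
    {B : ℝ} (hB : ∀ w, |Φ w - w.1| ≤ B) {w w' : ℝ × E} (hw : w.2 = w'.2) (hΦ : Φ w = Φ w') :
    w.1 = w'.1 := by
  by_contra hne
  have hΔ : 0 < |w.1 - w'.1| := abs_pos.2 (sub_ne_zero.2 hne)
  have hsemi : Function.Semiconj Φ f (m * ·) := hΦf
  obtain ⟨n, hn⟩ := ((tendsto_pow_atTop_atTop_of_one_lt (by linarith : 1 < |m| - ε)).atTop_mul_const
    hΔ).eventually_gt_atTop (2 * B) |>.exists
  have hΦn : Φ (f^[n] w) = Φ (f^[n] w') := by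
    rw [hsemi.iterate_right n w, hsemi.iterate_right n w', hΦ]
  have hcone : ‖w.2 - w'.2‖ ≤ |w.1 - w'.1| := by simp [hw]
  have hgrowth := pow_mul_abs_fst_sub_le_iterate hf hg hεC hcone n
  have hBw := abs_le.1 (hB (f^[n] w))
  have hBw' := abs_le.1 (hB (f^[n] w'))
  rw [hΦn] at hBw
  have : |(f^[n] w).1 - (f^[n] w').1| ≤ 2 * B :=
    abs_le.2 ⟨by linarith [hBw.2, hBw'.1], by linarith [hBw.1, hBw'.2]⟩
  linarith

theorem exists_tendsto_and_homeomorph_of_skew [ProperSpace E] (hε1 : 1 + ε < |m|) {B : ℝ}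
    (hgB : ∀ w, ‖g w‖ ≤ B) :
    ∃ Φ : ℝ × E → ℝ, (∀ w, Tendsto (fun n => (m ^ n)⁻¹ * (f^[n] w).1) atTop (𝓝 (Φ w))) ∧
      ∃ H : (ℝ × E) ≃ₜ (ℝ × E), ∀ w, H w = (Φ w, w.2) := by
  have hm : 1 < |m| := by linarith [ε.2]
  have hfc : Continuous f := by
    rw [show f = _ from funext hf]
    exact ((continuous_const.mul continuous_fst).prodMk (C.continuous.comp continuous_snd)).add
      hg.continuous
  have hdefect : ∀ w, |(f w).1 - m * w.1| ≤ B := fun w => by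
    simpa [hf] using (norm_fst_le (g w)).trans (hgB w)
  obtain ⟨Φ, hlim, hcont, hbd⟩ := exists_tendsto_pow_inv_mul_iterate hfc continuous_fst hm hdefect
  have hΦf := map_eq_mul_of_tendsto_iterate (abs_pos.1 (by linarith)) hlim
  obtain ⟨H, hH⟩ := exists_homeomorph_prodMk_of_abs_sub_fst_le hcont hbd
    fun _ _ hw hΦ => fst_eq_of_semiconj hf hg hεC hε1 hΦf hbd hw hΦ
  exact ⟨Φ, hlim, H, hH⟩

end

end SkewPerturbation

theorem Fin.forall_iff_zero_and_one_add {d : ℕ} (hd : 0 < d) {P : Fin d → Prop} :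
    (∀ i, P i) ↔ P ⟨0, hd⟩ ∧ ∀ j : Fin (d - 1), P ⟨1 + j, by omega⟩ := by
  refine ⟨fun h => ⟨h _, fun _ => h _⟩, fun ⟨h0, h1⟩ => ?_⟩
  rintro ⟨_ | i, hi⟩
  · exact h0
  · convert h1 ⟨i, by omega⟩ using 2
    simp only
    omega

section Coordinates

variable {d : ℕ} (hd : 0 < d)

def splitFst : EuclideanSpace ℝ (Fin d) ≃L[ℝ] ℝ × EuclideanSpace ℝ (Fin (d - 1)) :=
  let split : EuclideanSpace ℝ (Fin d) →ₗ[ℝ] ℝ × EuclideanSpace ℝ (Fin (d - 1)) :=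
    { toFun := fun z => (z ⟨0, hd⟩, projQ d 1 hd z)
      map_add' := fun _ _ => rfl
      map_smul' := fun _ _ => rfl }
  have hsplit : Function.Injective split := by
    rw [← LinearMap.ker_eq_bot, LinearMap.ker_eq_bot']
    intro z hz
    ext i
    revert i
    rw [Fin.forall_iff_zero_and_one_add hd]
    exact ⟨congrArg Prod.fst hz, fun j => congrArg (fun w => w.2 j) hz⟩
  (LinearMap.linearEquivOfInjective split hsplit (by simp; omega)).toContinuousLinearEquiv

@[simp]
lemma splitFst_apply (z : EuclideanSpace ℝ (Fin d)) :
    splitFst hd z = (z ⟨0, hd⟩, projQ d 1 hd z) := rfl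

end Coordinates

-- `(⊥ : Subring ℝ)` is the image of `ℤ` in `ℝ`.
def intLattice (n : ℕ) : Set (EuclideanSpace ℝ (Fin n)) := {v | ∀ i, v i ∈ (⊥ : Subring ℝ)}

lemma forall_mem_intLattice_iff {n : ℕ} {P : EuclideanSpace ℝ (Fin n) → Prop} :
    (∀ v ∈ intLattice n, P v) ↔ ∀ p : Fin n → ℤ, P (toEuc n fun i => (p i : ℝ)) := by
  refine ⟨fun h p => h _ fun i => intCast_mem _ (p i), fun h v hv => ?_⟩
  choose p hp using fun i => Subring.mem_bot.1 (hv i)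
  convert h p
  ext i
  exact (hp i).symm

lemma splitFst_mem_prod_iff {d : ℕ} (hd : 0 < d) {z : EuclideanSpace ℝ (Fin d)} :
    splitFst hd z ∈ ((⊥ : Subring ℝ) : Set ℝ) ×ˢ intLattice (d - 1) ↔ z ∈ intLattice d := by
  change _ ↔ ∀ i, z i ∈ (⊥ : Subring ℝ)
  rw [Fin.forall_iff_zero_and_one_add hd]
  rfl

lemma AddCircle.coe_eq_coe_iff_sub_mem_bot {x y : ℝ} :
    (x : AddCircle (1 : ℝ)) = y ↔ y - x ∈ (⊥ : Subring ℝ) := by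
  rw [eq_comm, QuotientAddGroup.eq_iff_sub_mem, AddSubgroup.mem_zmultiples_iff, Subring.mem_bot]
  simp

lemma torusProj_eq_iff {n : ℕ} {z z' : EuclideanSpace ℝ (Fin n)} :
    torusProj n z = torusProj n z' ↔ z' - z ∈ intLattice n := by
  simp only [funext_iff, torusProj, AddCircle.coe_eq_coe_iff_sub_mem_bot]
  rfl

lemma prodMap_torusProj_eq_iff {n : ℕ} {w w' : ℝ × EuclideanSpace ℝ (Fin n)} :
    Prod.map ((↑) : ℝ → AddCircle (1 : ℝ)) (torusProj n) w =
        Prod.map ((↑) : ℝ → AddCircle (1 : ℝ)) (torusProj n) w' ↔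
      w' - w ∈ ((⊥ : Subring ℝ) : Set ℝ) ×ˢ intLattice n := by
  simp only [Prod.map, Prod.ext_iff, AddCircle.coe_eq_coe_iff_sub_mem_bot, torusProj_eq_iff]
  rfl

lemma isOpenQuotientMap_torusProj (n : ℕ) : IsOpenQuotientMap (torusProj n) :=
  (IsOpenQuotientMap.piMap fun _ => QuotientAddGroup.isOpenQuotientMap_mk).comp
    (PiLp.homeomorph 2 _).isOpenQuotientMap

theorem Topology.IsQuotientMap.exists_homeomorph_comm {X X' Y Y' : Type*} [TopologicalSpace X]
    [TopologicalSpace X'] [TopologicalSpace Y] [TopologicalSpace Y'] {π : X → Y} {π' : X' → Y'}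
    (hπ : IsQuotientMap π) (hπ' : IsQuotientMap π') (h : X ≃ₜ X')
    (hh : ∀ x x', π' (h x) = π' (h x') ↔ π x = π x') :
    ∃ h' : Y ≃ₜ Y', ∀ x, h' (π x) = π' (h x) := by
  choose s hs using hπ.surjective
  choose s' hs' using hπ'.surjective
  have hfwd : ∀ x, π' (h (s (π x))) = π' (h x) := fun x => (hh _ _).2 (hs _)
  have hbwd : ∀ x', π (h.symm (s' (π' x'))) = π (h.symm x') := fun x' => by
    rw [← hh, h.apply_symm_apply, h.apply_symm_apply, hs']
  refine ⟨{ toFun := fun y => π' (h (s y))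
            invFun := fun y' => π (h.symm (s' y'))
            left_inv := fun y => ?_
            right_inv := fun y' => ?_
            continuous_toFun := ?_
            continuous_invFun := ?_ }, hfwd⟩
  · obtain ⟨x, rfl⟩ := hπ.surjective y
    simp only [hfwd, hbwd, h.symm_apply_apply]
  · obtain ⟨x', rfl⟩ := hπ'.surjective y'
    simp only [hbwd, hfwd, h.apply_symm_apply]
  · rw [hπ.continuous_iff, show (fun y => π' (h (s y))) ∘ π = π' ∘ h from funext hfwd]
    exact hπ'.continuous.comp h.continuous
  · rw [hπ'.continuous_iff, show (fun y' => π (h.symm (s' y'))) ∘ π' = π ∘ h.symm from funext hbwd]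
    exact hπ.continuous.comp h.symm.continuous

lemma sub_mem_prod_iff_of_map_add {d : ℕ} (hd : 0 < d)
    (H : EuclideanSpace ℝ (Fin d) ≃ₜ (ℝ × EuclideanSpace ℝ (Fin (d - 1))))
    (hHper : ∀ z, ∀ v ∈ intLattice d, H (z + v) = H z + splitFst hd v)
    {z z' : EuclideanSpace ℝ (Fin d)} :
    H z' - H z ∈ ((⊥ : Subring ℝ) : Set ℝ) ×ˢ intLattice (d - 1) ↔ z' - z ∈ intLattice d := by
  constructor
  · intro hmem
    set v := (splitFst hd).symm (H z' - H z)
    have hv : v ∈ intLattice d := by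
      rwa [← splitFst_mem_prod_iff hd, ContinuousLinearEquiv.apply_symm_apply]
    have : z' = z + v := H.injective (by
      rw [hHper z v hv, (splitFst hd).apply_symm_apply]
      abel)
    simpa [this] using hv
  · intro hv
    rw [show z' = z + (z' - z) by abel, hHper z _ hv, add_sub_cancel_left]
    exact (splitFst_mem_prod_iff hd).2 hv

theorem exists_torus_skew_conj {d : ℕ} (hd : 0 < d)
    {F : EuclideanSpace ℝ (Fin d) → EuclideanSpace ℝ (Fin d)}
    (hF : ∀ z, ∀ v ∈ intLattice d, F (z + v) - F z ∈ intLattice d) {m : ℤ}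
    {Φ : EuclideanSpace ℝ (Fin d) → ℝ} (hΦF : ∀ z, Φ (F z) = m * Φ z)
    (H : EuclideanSpace ℝ (Fin d) ≃ₜ (ℝ × EuclideanSpace ℝ (Fin (d - 1))))
    (hH : ∀ z, H z = (Φ z, projQ d 1 hd z))
    (hHper : ∀ z, ∀ v ∈ intLattice d, H (z + v) = H z + splitFst hd v) :
    ∃ (Fbar : (Fin d → AddCircle (1 : ℝ)) → (Fin d → AddCircle (1 : ℝ)))
      (Hbar : (Fin d → AddCircle (1 : ℝ)) ≃ₜ
        (AddCircle (1 : ℝ) × (Fin (d - 1) → AddCircle (1 : ℝ))))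
      (gbar : AddCircle (1 : ℝ) × (Fin (d - 1) → AddCircle (1 : ℝ)) →
        (Fin (d - 1) → AddCircle (1 : ℝ))),
      (∀ z, Fbar (torusProj d z) = torusProj d (F z)) ∧
      (∀ z, Hbar (torusProj d z) = (((Φ z : ℝ) : AddCircle (1 : ℝ)),
        torusProj (d - 1) (projQ d 1 hd z))) ∧
      (∀ θ, Hbar (Fbar (Hbar.symm θ)) = (m • θ.1, gbar θ)) := by
  have hfib : ∀ z z', Prod.map ((↑) : ℝ → AddCircle (1 : ℝ)) (torusProj (d - 1)) (H z) =
      Prod.map ((↑) : ℝ → AddCircle (1 : ℝ)) (torusProj (d - 1)) (H z') ↔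
        torusProj d z = torusProj d z' := fun z z' => by
    rw [prodMap_torusProj_eq_iff, torusProj_eq_iff, sub_mem_prod_iff_of_map_add hd H hHper]
  obtain ⟨Hbar, hHbar⟩ := (isOpenQuotientMap_torusProj d).isQuotientMap.exists_homeomorph_comm
    (QuotientAddGroup.isOpenQuotientMap_mk.prodMap
      (isOpenQuotientMap_torusProj (d - 1))).isQuotientMap H hfib
  have hFfac : Function.FactorsThrough (torusProj d ∘ F) (torusProj d) := fun z z' h => by
    rw [torusProj_eq_iff] at h
    simpa [torusProj_eq_iff, add_sub_cancel] using hF z _ h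
  refine ⟨Function.extend (torusProj d) (torusProj d ∘ F) id, Hbar,
    fun θ => (Hbar (Function.extend (torusProj d) (torusProj d ∘ F) id (Hbar.symm θ))).2,
    hFfac.extend_apply id, fun z => by rw [hHbar, hH]; rfl, fun θ => Prod.ext ?_ rfl⟩
  obtain ⟨z, hz⟩ := (isOpenQuotientMap_torusProj d).surjective (Hbar.symm θ)
  obtain rfl : θ = Hbar (torusProj d z) := by rw [hz, Hbar.apply_symm_apply]
  rw [Hbar.symm_apply_apply, hFfac.extend_apply, Function.comp_apply, hHbar, hHbar, hH, hH,
    Prod.map_fst, Prod.map_fst, hΦF, ← zsmul_eq_mul]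
  exact QuotientAddGroup.mk_zsmul _ _ _

section Lift

lemma lipschitzWith_of_norm_add_norm_fderiv_lt {V W : Type*} [NormedAddCommGroup V]
    [NormedSpace ℝ V] [NormedAddCommGroup W] [NormedSpace ℝ W] {G : V → W} (hG : ContDiff ℝ 1 G)
    {δ : ℝ} (hGδ : ∀ z, ‖G z‖ + ‖fderiv ℝ G z‖ < δ) : LipschitzWith δ.toNNReal G :=
  lipschitzWith_of_nnnorm_fderiv_le (hG.differentiable one_ne_zero) fun z => by
    rw [← NNReal.coe_le_coe, coe_nnnorm]
    exact (le_add_of_nonneg_left (norm_nonneg _)).trans ((hGδ z).le.trans (Real.le_coe_toNNReal δ))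

lemma exists_pos_forall_lipschitzWith_conj {V W : Type*} [NormedAddCommGroup V]
    [NormedSpace ℝ V] [NormedAddCommGroup W] [NormedSpace ℝ W] (e : V ≃L[ℝ] W) {c : ℝ}
    (hc : 0 < c) :
    ∃ δ > 0, ∀ G : V → V, ContDiff ℝ 1 G → (∀ z, ‖G z‖ + ‖fderiv ℝ G z‖ < δ) →
      ∃ ε : ℝ≥0, ε < c ∧ LipschitzWith ε fun w => e (G (e.symm w)) := by
  obtain ⟨δ, hδ, hδc⟩ := exists_pos_mul_lt hc
    (‖e.toContinuousLinearMap‖ * ‖e.symm.toContinuousLinearMap‖)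
  refine ⟨δ, hδ, fun G hG hGδ => ⟨_, ?_, e.lipschitz.comp
    ((lipschitzWith_of_norm_add_norm_fderiv_lt hG hGδ).comp e.symm.lipschitz)⟩⟩
  simpa [Real.coe_toNNReal _ hδ.le, mul_comm, mul_left_comm, mul_assoc] using hδc

variable {d : ℕ} (hd : 0 < d) {M : Matrix (Fin d) (Fin d) ℝ} {m : ℤ}
  {C : EuclideanSpace ℝ (Fin (d - 1)) →L[ℝ] EuclideanSpace ℝ (Fin (d - 1))}
  {G F : EuclideanSpace ℝ (Fin d) → EuclideanSpace ℝ (Fin d)}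

lemma mulVec_mem_intLattice (hMint : ∀ i j, ∃ n : ℤ, M i j = (n : ℝ))
    {v : EuclideanSpace ℝ (Fin d)} (hv : v ∈ intLattice d) : toEuc d (M.mulVec v) ∈ intLattice d :=
  fun i => show ∑ j, M i j * v j ∈ (⊥ : Subring ℝ) from Subring.sum_mem _ fun j _ =>
    mul_mem (Subring.mem_bot.2 ((hMint i j).imp fun _ h => h.symm)) (hv j)

lemma lift_add_sub_mem_intLattice (hMint : ∀ i j, ∃ n : ℤ, M i j = (n : ℝ))
    (hGper : ∀ z, ∀ v ∈ intLattice d, G (z + v) = G z) (hF : ∀ z, F z = toEuc d (M.mulVec z) + G z)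
    (z : EuclideanSpace ℝ (Fin d)) {v : EuclideanSpace ℝ (Fin d)} (hv : v ∈ intLattice d) :
    F (z + v) - F z ∈ intLattice d := by
  convert mulVec_mem_intLattice hMint hv using 1
  simp only [hF, hGper z v hv, toEuc, WithLp.ofLp_add, Matrix.mulVec_add, WithLp.toLp_add]
  abel

lemma continuous_lift (hG : Continuous G) (hF : ∀ z, F z = toEuc d (M.mulVec z) + G z) :
    Continuous F := by
  rw [show F = _ from funext hF]
  exact ((PiLp.continuous_toLp 2 _).comp
    (continuous_const.matrix_mulVec (PiLp.continuous_ofLp 2 _))).add hG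

variable (hblock : ∀ z : EuclideanSpace ℝ (Fin d),
      toEuc d (M.mulVec z) ⟨0, hd⟩ = (m : ℝ) * z ⟨0, hd⟩ ∧
      projQ d 1 hd (toEuc d (M.mulVec z)) = C (projQ d 1 hd z))
include hblock

lemma splitFst_mulVec (z : EuclideanSpace ℝ (Fin d)) :
    splitFst hd (toEuc d (M.mulVec z)) = ((m : ℝ) * (splitFst hd z).1, C (splitFst hd z).2) :=
  Prod.ext (hblock z).1 (hblock z).2

theorem exists_semiconj_homeomorph_of_lift (hMint : ∀ i j, ∃ n : ℤ, M i j = (n : ℝ))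
    (hGper : ∀ z, ∀ v ∈ intLattice d, G (z + v) = G z) {B : ℝ} (hGB : ∀ z, ‖G z‖ ≤ B)
    {ε : ℝ≥0} (hg : LipschitzWith ε fun w => splitFst hd (G ((splitFst hd).symm w)))
    (hεC : ‖C‖ + 2 * ε ≤ |(m : ℝ)|) (hε1 : 1 + ε < |(m : ℝ)|)
    (hF : ∀ z, F z = toEuc d (M.mulVec z) + G z) :
    ∃ Φ : EuclideanSpace ℝ (Fin d) → ℝ,
      (∀ z, Tendsto (fun n : ℕ => ((m : ℝ) ^ n)⁻¹ * (F^[n] z) ⟨0, hd⟩) atTop (𝓝 (Φ z))) ∧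
      (∀ z, Φ (F z) = m * Φ z) ∧
      ∃ H : EuclideanSpace ℝ (Fin d) ≃ₜ (ℝ × EuclideanSpace ℝ (Fin (d - 1))),
        (∀ z, H z = (Φ z, projQ d 1 hd z)) ∧
        ∀ z, ∀ v ∈ intLattice d, H (z + v) = H z + splitFst hd v := by
  set e := splitFst hd
  have he : ∀ z : EuclideanSpace ℝ (Fin d),
      e (toEuc d (M.mulVec z)) = ((m : ℝ) * (e z).1, C (e z).2) := splitFst_mulVec hd hblock
  set f := fun w => e (F (e.symm w))
  have hf : ∀ w, f w = ((m : ℝ) * w.1, C w.2) + e (G (e.symm w)) := fun w => by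
    simp only [f, hF, map_add, he, e.apply_symm_apply]
  obtain ⟨Φ, hlim, H, hH⟩ := exists_tendsto_and_homeomorph_of_skew hf hg hεC hε1
    (B := ‖e.toContinuousLinearMap‖ * B) fun w =>
      (e.toContinuousLinearMap.le_opNorm _).trans (by gcongr; exact hGB _)
  have hsemi : Function.Semiconj e F f := fun z => by simp only [f, e.symm_apply_apply]
  have hm0 : (m : ℝ) ≠ 0 := abs_pos.1 (by linarith [ε.2])
  have hΦper : ∀ z, ∀ v ∈ intLattice d, Φ (e z + e v) = Φ (e z) + (e v).1 := fun z v hv =>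
    eq_add_fst_of_periodic hf (Γ := e '' intLattice d)
      (by
        rintro _ ⟨u, hu, rfl⟩
        exact ⟨_, mulVec_mem_intLattice hMint hu, he u⟩)
      (by
        rintro w _ ⟨u, hu, rfl⟩
        simp only [map_add, e.symm_apply_apply, hGper _ u hu])
      hm0 hlim (e z) ⟨v, hv, rfl⟩
  refine ⟨Φ ∘ e, fun z => (hlim (e z)).congr fun n => ?_, fun z => ?_,
    e.toHomeomorph.trans H, fun z => by simp [hH, e], fun z v hv => ?_⟩
  · rw [← hsemi.iterate_right n z]
    rfl
  · simp only [Function.comp_apply, hsemi z, map_eq_mul_of_tendsto_iterate hm0 hlim]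
  · simp only [Homeomorph.trans_apply, ContinuousLinearEquiv.coe_toHomeomorph, map_add, hH,
      hΦper z v hv]
    rfl

end Lift

theorem stmt19_general (d : ℕ) (hd : 0 < d)
    (M : Matrix (Fin d) (Fin d) ℝ) (hMint : ∀ i j, ∃ n : ℤ, M i j = (n : ℝ))
    (m : ℤ) (hm : 1 < |m|)
    (C : EuclideanSpace ℝ (Fin (d - 1)) →L[ℝ] EuclideanSpace ℝ (Fin (d - 1)))
    (hCnorm : ‖C‖ < |(m : ℝ)|)
    (hblock : ∀ z : EuclideanSpace ℝ (Fin d),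
      toEuc d (M.mulVec z) ⟨0, hd⟩ = (m : ℝ) * z ⟨0, hd⟩ ∧
      projQ d 1 hd (toEuc d (M.mulVec z)) = C (projQ d 1 hd z)) :
    ∃ δ > (0 : ℝ),
      ∀ G : EuclideanSpace ℝ (Fin d) → EuclideanSpace ℝ (Fin d),
        ContDiff ℝ 1 G →
        (∀ (z : EuclideanSpace ℝ (Fin d)) (p : Fin d → ℤ),
          G (z + toEuc d fun i => (p i : ℝ)) = G z) →
        (∀ z, ‖G z‖ + ‖fderiv ℝ G z‖ < δ) →
        ∀ F : EuclideanSpace ℝ (Fin d) → EuclideanSpace ℝ (Fin d),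
          (∀ z, F z = toEuc d (M.mulVec z) + G z) →
          ∃ Φ : EuclideanSpace ℝ (Fin d) → ℝ,
            (∀ z, Tendsto (fun n : ℕ => ((m : ℝ) ^ n)⁻¹ * (F^[n] z) ⟨0, hd⟩)
              atTop (𝓝 (Φ z))) ∧
            ∃ H : EuclideanSpace ℝ (Fin d) ≃ₜ (ℝ × EuclideanSpace ℝ (Fin (d - 1))),
              (∀ z, H z = (Φ z, projQ d 1 hd z)) ∧
              (∀ (z : EuclideanSpace ℝ (Fin d)) (p : Fin d → ℤ),
                H (z + toEuc d fun i => (p i : ℝ))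
                  = H z + ((p ⟨0, hd⟩ : ℝ), projQ d 1 hd (toEuc d fun i => (p i : ℝ)))) ∧
              (∃ g : ℝ × EuclideanSpace ℝ (Fin (d - 1)) → EuclideanSpace ℝ (Fin (d - 1)),
                Continuous g ∧
                ∀ w : ℝ × EuclideanSpace ℝ (Fin (d - 1)),
                  H (F (H.symm w)) = ((m : ℝ) * w.1, g w)) ∧
              -- hence the induced torus map is topologically conjugate to a skew product
              -- over the expanding circle map `x ↦ mx mod 1`:
              ∃ (Fbar : (Fin d → AddCircle (1 : ℝ)) → (Fin d → AddCircle (1 : ℝ)))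
                (Hbar : (Fin d → AddCircle (1 : ℝ)) ≃ₜ
                  (AddCircle (1 : ℝ) × (Fin (d - 1) → AddCircle (1 : ℝ))))
                (gbar : AddCircle (1 : ℝ) × (Fin (d - 1) → AddCircle (1 : ℝ)) →
                  (Fin (d - 1) → AddCircle (1 : ℝ))),
                (∀ z, Fbar (torusProj d z) = torusProj d (F z)) ∧
                (∀ z, Hbar (torusProj d z) = (((Φ z : ℝ) : AddCircle (1 : ℝ)),
                  torusProj (d - 1) (projQ d 1 hd z))) ∧
                (∀ θ, Hbar (Fbar (Hbar.symm θ)) = (m • θ.1, gbar θ)) := by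
  have hm' : 1 < |(m : ℝ)| := by rw [← Int.cast_abs]; exact_mod_cast hm
  -- the cone argument needs `‖C‖ + 2ε ≤ |m|` and `1 + ε < |m|`
  obtain ⟨δ, hδ, hsmall⟩ := exists_pos_forall_lipschitzWith_conj (splitFst hd)
    (lt_min (by linarith : 0 < (|(m : ℝ)| - ‖C‖) / 2) (by linarith : 0 < |(m : ℝ)| - 1))
  refine ⟨δ, hδ, fun G hG hGper hGδ F hF => ?_⟩
  obtain ⟨ε, hε, hg⟩ := hsmall G hG hGδ
  have hGper' : ∀ z, ∀ v ∈ intLattice d, G (z + v) = G z :=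
    fun z => forall_mem_intLattice_iff.2 (hGper z)
  obtain ⟨Φ, hlim, hΦF, H, hH, hHper⟩ := exists_semiconj_homeomorph_of_lift hd hblock hMint hGper'
    (fun z => (le_add_of_nonneg_right (norm_nonneg _)).trans (hGδ z).le) hg
    (by linarith [min_le_left ((|(m : ℝ)| - ‖C‖) / 2) (|(m : ℝ)| - 1)])
    (by linarith [min_le_right ((|(m : ℝ)| - ‖C‖) / 2) (|(m : ℝ)| - 1)]) hF
  have hΦH : ∀ w, Φ (H.symm w) = w.1 := fun w => by
    simpa using (congrArg Prod.fst (hH (H.symm w))).symm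
  refine ⟨Φ, hlim, H, hH, fun z => forall_mem_intLattice_iff.1 (hHper z),
    ⟨fun w => (H (F (H.symm w))).2, continuous_snd.comp (H.continuous.comp
      ((continuous_lift hG.continuous hF).comp H.symm.continuous)),
      fun w => Prod.ext (by simp only [hH, hΦF, hΦH]) rfl⟩,
    exists_torus_skew_conj hd (fun z _ hv => lift_add_sub_mem_intLattice hMint hGper' hF z hv)
      hΦF H hH hHper⟩

/--
Let `M` be a `d×d` integer matrix of block-diagonal form
`M(z) = (m·z₁, C(Qz))`, where `m` is an integer with `|m| > 1` and `C` is a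
`(d−1)×(d−1)` integer matrix with operator norm `‖C‖ < |m|`. Then there exists
`δ = δ(M) > 0` such that for every C¹, `ℤ^d`-periodic map `G : ℝ^d → ℝ^d` with
`sup_z (‖G(z)‖ + ‖DG(z)‖) < δ`, the lift `F̂(z) = Mz + G(z)` satisfies: the limit
`Φ̂(z) = lim_{n→∞} m^{−n} (F̂ⁿ(z))₁` exists for all `z`, the map `Ĥ(z) = (Φ̂(z), Qz)` is
a homeomorphism of `ℝ^d` with `Ĥ(z + p) = Ĥ(z) + (p₁, Qp)` for all `p ∈ ℤ^d`, and
`Ĥ∘F̂∘Ĥ⁻¹(x, y) = (m·x, g(x,y))` for some continuous `g`. Hence the torus map induced by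
`F̂` is topologically conjugate to a skew product over the expanding circle map
`x ↦ mx mod 1`, for every sufficiently small C¹ periodic perturbation `G`.
-/
theorem stmt19 (d : ℕ) (hd : 0 < d)
    (M : Matrix (Fin d) (Fin d) ℝ) (hMint : ∀ i j, ∃ n : ℤ, M i j = (n : ℝ))
    (m : ℤ) (hm : 1 < |m|)
    (C : EuclideanSpace ℝ (Fin (d - 1)) →L[ℝ] EuclideanSpace ℝ (Fin (d - 1)))
    (hCint : ∀ i j, ∃ n : ℤ, C (EuclideanSpace.single j (1 : ℝ)) i = (n : ℝ))
    (hCnorm : ‖C‖ < |(m : ℝ)|)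
    (hblock : ∀ z : EuclideanSpace ℝ (Fin d),
      toEuc d (M.mulVec z) ⟨0, hd⟩ = (m : ℝ) * z ⟨0, hd⟩ ∧
      projQ d 1 hd (toEuc d (M.mulVec z)) = C (projQ d 1 hd z)) :
    ∃ δ > (0 : ℝ),
      ∀ G : EuclideanSpace ℝ (Fin d) → EuclideanSpace ℝ (Fin d),
        ContDiff ℝ 1 G →
        (∀ (z : EuclideanSpace ℝ (Fin d)) (p : Fin d → ℤ),
          G (z + toEuc d fun i => (p i : ℝ)) = G z) →
        (∀ z, ‖G z‖ + ‖fderiv ℝ G z‖ < δ) →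
        ∀ F : EuclideanSpace ℝ (Fin d) → EuclideanSpace ℝ (Fin d),
          (∀ z, F z = toEuc d (M.mulVec z) + G z) →
          ∃ Φ : EuclideanSpace ℝ (Fin d) → ℝ,
            (∀ z, Tendsto (fun n : ℕ => ((m : ℝ) ^ n)⁻¹ * (F^[n] z) ⟨0, hd⟩)
              atTop (𝓝 (Φ z))) ∧
            ∃ H : EuclideanSpace ℝ (Fin d) ≃ₜ (ℝ × EuclideanSpace ℝ (Fin (d - 1))),
              (∀ z, H z = (Φ z, projQ d 1 hd z)) ∧
              (∀ (z : EuclideanSpace ℝ (Fin d)) (p : Fin d → ℤ),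
                H (z + toEuc d fun i => (p i : ℝ))
                  = H z + ((p ⟨0, hd⟩ : ℝ), projQ d 1 hd (toEuc d fun i => (p i : ℝ)))) ∧
              (∃ g : ℝ × EuclideanSpace ℝ (Fin (d - 1)) → EuclideanSpace ℝ (Fin (d - 1)),
                Continuous g ∧
                ∀ w : ℝ × EuclideanSpace ℝ (Fin (d - 1)),
                  H (F (H.symm w)) = ((m : ℝ) * w.1, g w)) ∧
              -- hence the induced torus map is topologically conjugate to a skew product
              -- over the expanding circle map `x ↦ mx mod 1`:
              ∃ (Fbar : (Fin d → AddCircle (1 : ℝ)) → (Fin d → AddCircle (1 : ℝ)))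
                (Hbar : (Fin d → AddCircle (1 : ℝ)) ≃ₜ
                  (AddCircle (1 : ℝ) × (Fin (d - 1) → AddCircle (1 : ℝ))))
                (gbar : AddCircle (1 : ℝ) × (Fin (d - 1) → AddCircle (1 : ℝ)) →
                  (Fin (d - 1) → AddCircle (1 : ℝ))),
                (∀ z, Fbar (torusProj d z) = torusProj d (F z)) ∧
                (∀ z, Hbar (torusProj d z) = (((Φ z : ℝ) : AddCircle (1 : ℝ)),
                  torusProj (d - 1) (projQ d 1 hd z))) ∧
                (∀ θ, Hbar (Fbar (Hbar.symm θ)) = (m • θ.1, gbar θ)) :=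
  stmt19_general d hd M hMint m hm C hCnorm hblock
end
end
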